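/- arXiv:1409.2325 — 2 statements merged into one kernel-verified Lean document; each statement's English description precedes it below -/
import Mathlib

section
/- The set of rulings {v ∈ L : B(v,v) = 0, B(v,K) = −2, B(v,C) = 0} is finite and has exactly 27 elements. -/
noncomputable section
namespace ADEPaper

/-- The Picard lattice `L = ℤ^{n+2}` with basis `h = e 0`, `lᵢ = e i` for `1 ≤ i ≤ n+1`. -/
abbrev L (n : ℕ) : Type := Fin (n + 2) → ℤ

/-- The intersection form: `B(h,h) = 1`, `B(lᵢ,lᵢ) = -1`, distinct basis vectors orthogonal. -/
def B (n : ℕ) (v w : L n) : ℤ :=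
  v 0 * w 0 - ∑ i : Fin (n + 1), v i.succ * w i.succ

/-- The canonical class `K = -3h + l₁ + ⋯ + l_{n+1}`. -/
def K (n : ℕ) : L n := fun j => if j = 0 then -3 else 1

/-- `C = l_{n+1}`, the exceptional curve of the `Eₙ`-surface. -/
def C (n : ℕ) : L n := fun j => if j = Fin.last (n + 1) then 1 else 0

/-!
Write `v = a h + ∑ bᵢ lᵢ`. The ruling conditions say `b₇ = 0`, `∑ bᵢ² = a²` and
`3a + ∑ bᵢ = 2`, with `i` running over `1, …, 6`. Cauchy–Schwarz gives `(2 - 3a)² ≤ 6a²`, so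
`1 ≤ a ≤ 3`; applied to the five coordinates other than `bⱼ` it gives
`(2 - 3a - bⱼ)² ≤ 5(a² - bⱼ²)`, which forces `-2 ≤ bⱼ ≤ 0`. The rulings therefore lie in a box
of `3⁷` lattice points, among which a finite computation finds exactly the 27 classes
`h - lᵢ`, `2h - lᵢ - lⱼ - lₖ - lₘ` and `3h - 2lᵢ - ∑_{j ≠ i} lⱼ`.
-/

def IsRuling (n : ℕ) (v : L n) : Prop :=
  B n v v = 0 ∧ B n v (K n) = -2 ∧ B n v (C n) = 0

instance (n : ℕ) : DecidablePred (IsRuling n) :=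
  fun _ => inferInstanceAs (Decidable (_ ∧ _ ∧ _))

section Form

variable {n : ℕ}

theorem B_self (v : L n) : B n v v = v 0 ^ 2 - ∑ i : Fin (n + 1), v i.succ ^ 2 := by
  simp only [B, sq]

theorem B_K (v : L n) : B n v (K n) = -3 * v 0 - ∑ i : Fin (n + 1), v i.succ := by
  simp [B, K, mul_comm]

theorem B_C (v : L n) : B n v (C n) = -v (Fin.last (n + 1)) := by
  simp [B, C, Fin.succ_inj, ← Fin.succ_last, (Fin.succ_ne_zero _).symm]

theorem isRuling_iff (v : L n) :
    IsRuling n v ↔ v (Fin.last (n + 1)) = 0 ∧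
      ∑ i : Fin n, v i.castSucc.succ ^ 2 = v 0 ^ 2 ∧
      3 * v 0 + ∑ i : Fin n, v i.castSucc.succ = 2 := by
  simp only [IsRuling, B_self, B_K, B_C, Fin.sum_univ_castSucc (fun i => v i.succ ^ 2),
    Fin.sum_univ_castSucc (fun i => v i.succ), Fin.succ_last]
  constructor
  · rintro ⟨hsq, hK, hC⟩
    have hlast : v (Fin.last (n + 1)) = 0 := neg_eq_zero.mp hC
    refine ⟨hlast, ?_, ?_⟩ <;> simp only [hlast] at hsq hK <;> linarith
  · rintro ⟨hlast, hsq, hK⟩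
    refine ⟨?_, ?_, ?_⟩ <;> simp only [hlast] <;> linarith

end Form

theorem sq_sum_erase_le {ι R : Type*} [Fintype ι] [DecidableEq ι] [CommRing R] [LinearOrder R]
    [IsStrictOrderedRing R] (b : ι → R) (j : ι) :
    (∑ i, b i - b j) ^ 2 ≤ (Fintype.card ι - 1) * (∑ i, b i ^ 2 - b j ^ 2) := by
  have : Nonempty ι := ⟨j⟩
  have h := sq_sum_le_card_mul_sum_sq (s := Finset.univ.erase j) (f := b)
  rwa [Finset.sum_erase_eq_sub (Finset.mem_univ j), Finset.sum_erase_eq_sub (Finset.mem_univ j),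
    Finset.card_erase_of_mem (Finset.mem_univ j), Finset.card_univ,
    Nat.cast_pred Fintype.card_pos] at h

section Bounds

variable {a : ℤ} {b : Fin 6 → ℤ}

theorem degree_bounds (hsq : ∑ i, b i ^ 2 = a ^ 2) (hsum : 3 * a + ∑ i, b i = 2) :
    1 ≤ a ∧ a ≤ 3 := by
  have h := sq_sum_le_card_mul_sum_sq (s := Finset.univ) (f := b)
  simp only [Finset.card_univ, Fintype.card_fin, hsq] at h
  have : 3 * a ^ 2 - 12 * a + 4 ≤ 0 := by push_cast at h; nlinarith
  constructor <;> nlinarith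

theorem multiplicity_bounds (hsq : ∑ i, b i ^ 2 = a ^ 2) (hsum : 3 * a + ∑ i, b i = 2)
    (j : Fin 6) : -2 ≤ b j ∧ b j ≤ 0 := by
  have h := sq_sum_erase_le b j
  rw [Fintype.card_fin, hsq, show ∑ i, b i = 2 - 3 * a by linarith] at h
  obtain ⟨ha₁, ha₃⟩ := degree_bounds hsq hsum
  push_cast at h
  interval_cases a <;> constructor <;> nlinarith

end Bounds

def rulingBox : Finset (L 6) :=
  Finset.Icc ![1, -2, -2, -2, -2, -2, -2, 0] ![3, 0, 0, 0, 0, 0, 0, 0]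

theorem mem_rulingBox_of_isRuling {v : L 6} (hv : IsRuling 6 v) : v ∈ rulingBox := by
  obtain ⟨hlast, hsq, hsum⟩ := (isRuling_iff v).mp hv
  have ha := degree_bounds hsq hsum
  have hb := multiplicity_bounds hsq hsum
  simp only [rulingBox, Finset.mem_Icc, Pi.le_def, Fin.forall_fin_succ, IsEmpty.forall_iff,
    Matrix.cons_val_zero, Matrix.cons_val_succ, Matrix.cons_val_fin_one, Int.reduceNeg,
    Nat.reduceAdd, Fin.isValue, Fin.castSucc_zero, Fin.succ_zero_eq_one, Fin.castSucc_one,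
    Fin.succ_one_eq_two, Fin.reduceCastSucc, Fin.reduceSucc, Fin.reduceLast, and_true] at hb hlast ⊢
  omega

set_option maxRecDepth 4000 in
theorem card_filter_isRuling_rulingBox : (rulingBox.filter (IsRuling 6)).card = 27 := by
  decide

/-- The set of rulings on an `E_6`-surface, i.e. classes `v` with `B(v,v) = 0`,
`B(v,K) = -2` and `B(v,C) = 0`, is finite with exactly 27 elements. -/
theorem E6_rulings_card :
    {v : L 6 | B 6 v v = 0 ∧ B 6 v (K 6) = -2 ∧ B 6 v (C 6) = 0}.Finite ∧
    {v : L 6 | B 6 v v = 0 ∧ B 6 v (K 6) = -2 ∧ B 6 v (C 6) = 0}.ncard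
      = 27 := by
  change {v | IsRuling 6 v}.Finite ∧ {v | IsRuling 6 v}.ncard = 27
  have hset : {v | IsRuling 6 v} = ↑(rulingBox.filter (IsRuling 6)) := by
    ext v
    simpa using mem_rulingBox_of_isRuling
  rw [hset]
  exact ⟨Finset.finite_toSet _, by rw [Set.ncard_coe_finset, card_filter_isRuling_rulingBox]⟩

end ADEPaper
end
end

section
/- For any two lines v and w, i.e., any v, w ∈ L with B(v,v) = B(v,K) = −1, B(v,C) = 0 and B(w,w) = B(w,K) = −1, B(w,C) = 0, there exists a ℤ-linear automorphism g of L satisfying B(g(x), g(y)) = B(x,y) for all x, y ∈ L, g(K) = K, g(C) = C, and g(v) = w. (That is, the group of isometries of the lattice fixing K and C, which contains the Weyl group W(Eₙ) generated by reflections in the roots, acts transitively on the set of lines.) -/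
/-!
The isometry is a product of reflections `x ↦ x + B(α, x) α` in roots `α`. Write a line as
`v = a h + ∑ bᵢ lᵢ`; then `b_{n+1} = 0`, `∑ bᵢ = 1 - 3a` and `∑ bᵢ² = a² + 1`. If `a > 0`, the
three smallest `bᵢ` sum to at most `-(a + 1)` (here `n ≤ 8` enters), so the reflection in
`h - lᵢ - lⱼ - lₖ` lowers `a` to `2a + bᵢ + bⱼ + bₖ < a`. Once `a ≤ 0`, Cauchy–Schwarz and
`bᵢ ≤ bᵢ²` force `a = 0` and `v = lᵢ` with `i ≤ n`, and the reflections in `lᵢ - lⱼ` permute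
these lines.
-/

noncomputable section
namespace ADEPaper

section

variable {n : ℕ}

def h (n : ℕ) : L n := Pi.single 0 1

/-- `l n i` is the paper's `l_{i+1}`. -/
def l (n : ℕ) (i : Fin (n + 1)) : L n := Pi.single i.succ 1

def IsLine (n : ℕ) (v : L n) : Prop :=
  B n v v = -1 ∧ B n v (K n) = -1 ∧ B n v (C n) = 0

def IsRoot (n : ℕ) (α : L n) : Prop :=
  B n α α = -2 ∧ B n α (K n) = 0 ∧ B n α (C n) = 0

@[simp] lemma h_apply_zero : h n 0 = 1 := by simp [h]

@[simp] lemma h_apply_succ (i : Fin (n + 1)) : h n i.succ = 0 := by simp [h]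

@[simp] lemma l_apply_zero (i : Fin (n + 1)) : l n i 0 = 0 := by
  simp [l, (Fin.succ_ne_zero i).symm]

@[simp] lemma l_apply_succ (i j : Fin (n + 1)) : l n i j.succ = if j = i then 1 else 0 := by
  simp [l, Pi.single_apply]

@[simp] lemma K_apply_zero : K n 0 = -3 := rfl

@[simp] lemma K_apply_succ (i : Fin (n + 1)) : K n i.succ = 1 := by simp [K]

lemma C_eq_l_last : C n = l n (Fin.last n) := by
  funext j
  simp [C, l, Pi.single_apply, Fin.succ_last]

lemma B_comm (x y : L n) : B n x y = B n y x := by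
  simp only [B, mul_comm]

lemma B_add_left (x y z : L n) : B n (x + y) z = B n x z + B n y z := by
  simp only [B, Pi.add_apply, add_mul, Finset.sum_add_distrib]; ring

lemma B_smul_left (c : ℤ) (x y : L n) : B n (c • x) y = c * B n x y := by
  simp only [B, Pi.smul_apply, smul_eq_mul, mul_sub, Finset.mul_sum, mul_assoc]

lemma B_add_right (x y z : L n) : B n x (y + z) = B n x y + B n x z := by
  simp only [B_comm x, B_add_left]

lemma B_smul_right (c : ℤ) (x y : L n) : B n x (c • y) = c * B n x y := by
  simp only [B_comm x, B_smul_left]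

def form (n : ℕ) : LinearMap.BilinForm ℤ (L n) :=
  LinearMap.mk₂ ℤ (B n) B_add_left B_smul_left B_add_right B_smul_right

@[simp] lemma form_apply (x y : L n) : form n x y = B n x y := rfl

lemma B_sub_right (x y z : L n) : B n x (y - z) = B n x y - B n x z :=
  (form n x).map_sub y z

lemma B_h (x : L n) : B n x (h n) = x 0 := by
  simp [B]

lemma B_l (x : L n) (i : Fin (n + 1)) : B n x (l n i) = -x i.succ := by
  simp [B]

lemma B_h_sub_l_sub_l_sub_l (x : L n) (i j k : Fin (n + 1)) :
    B n x (h n - l n i - l n j - l n k) = x 0 + x i.succ + x j.succ + x k.succ := by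
  simp only [B_sub_right, B_h, B_l]; ring

lemma B_l_sub_l (x : L n) (i j : Fin (n + 1)) :
    B n x (l n i - l n j) = x j.succ - x i.succ := by
  simp only [B_sub_right, B_l]; ring

lemma isRoot_l_sub_l {i j : Fin n} (hij : i ≠ j) :
    IsRoot n (l n i.castSucc - l n j.castSucc) := by
  refine ⟨?_, ?_, ?_⟩
  · rw [B_l_sub_l]; simp [hij, Ne.symm hij]
  · rw [B_comm, B_l_sub_l]; simp
  · rw [B_comm, B_l_sub_l, C_eq_l_last]; simp [Fin.castSucc_ne_last]

lemma isRoot_h_sub_l_sub_l_sub_l {i j k : Fin n} (hij : i ≠ j) (hik : i ≠ k) (hjk : j ≠ k) :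
    IsRoot n (h n - l n i.castSucc - l n j.castSucc - l n k.castSucc) := by
  refine ⟨?_, ?_, ?_⟩
  · rw [B_h_sub_l_sub_l_sub_l]; simp [hij, hik, hjk, Ne.symm hij, Ne.symm hik, Ne.symm hjk]
  · rw [B_comm, B_h_sub_l_sub_l_sub_l]; simp
  · rw [B_comm, B_h_sub_l_sub_l_sub_l, C_eq_l_last]; simp [Fin.castSucc_ne_last]

def reflect {α : L n} (hα : IsRoot n α) : L n ≃ₗ[ℤ] L n :=
  Module.reflection (f := -form n α) (x := α) (by simp [hα.1])

lemma reflect_apply {α : L n} (hα : IsRoot n α) (x : L n) :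
    reflect hα x = x + B n α x • α := by
  simp [reflect, Module.reflection_apply, sub_eq_add_neg]

def isometryGroupKC (n : ℕ) : Subgroup (L n ≃ₗ[ℤ] L n) where
  carrier := {g | (∀ x y, B n (g x) (g y) = B n x y) ∧ g (K n) = K n ∧ g (C n) = C n}
  mul_mem' := by
    rintro g g' ⟨hg, hgK, hgC⟩ ⟨hg', hg'K, hg'C⟩
    exact ⟨fun x y => by simp only [LinearEquiv.mul_apply, hg, hg'], by simp [hg'K, hgK],
      by simp [hg'C, hgC]⟩
  one_mem' := ⟨fun _ _ => rfl, rfl, rfl⟩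
  inv_mem' := by
    rintro g ⟨hg, hgK, hgC⟩
    refine ⟨fun x y => ?_, ?_, ?_⟩
    · rw [← hg, LinearEquiv.coe_inv, g.apply_symm_apply, g.apply_symm_apply]
    · rw [LinearEquiv.coe_inv, g.symm_apply_eq, hgK]
    · rw [LinearEquiv.coe_inv, g.symm_apply_eq, hgC]

lemma reflect_mem {α : L n} (hα : IsRoot n α) : reflect hα ∈ isometryGroupKC n := by
  refine ⟨fun x y => ?_, ?_, ?_⟩
  · simp only [reflect_apply, B_add_left, B_add_right, B_smul_left, B_smul_right, hα.1]
    rw [B_comm x α]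
    ring
  · rw [reflect_apply, hα.2.1, zero_smul, add_zero]
  · rw [reflect_apply, hα.2.2, zero_smul, add_zero]

lemma IsLine.map {g : L n ≃ₗ[ℤ] L n} (hg : g ∈ isometryGroupKC n) {v : L n} (hv : IsLine n v) :
    IsLine n (g v) := by
  obtain ⟨hB, hK, hC⟩ := hg
  exact ⟨by rw [hB, hv.1], by rw [← hK, hB, hv.2.1], by rw [← hC, hB, hv.2.2]⟩

lemma IsLine.apply_last {v : L n} (hv : IsLine n v) : v (Fin.last n).succ = 0 := by
  have := hv.2.2
  rw [C_eq_l_last, B_l] at this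
  omega

lemma IsLine.sum_eq {v : L n} (hv : IsLine n v) :
    ∑ i : Fin n, v i.castSucc.succ = 1 - 3 * v 0 := by
  have := hv.2.1
  simp only [B, K_apply_zero, K_apply_succ, mul_one] at this
  rw [Fin.sum_univ_castSucc, hv.apply_last] at this
  linarith

lemma IsLine.sum_sq_eq {v : L n} (hv : IsLine n v) :
    ∑ i : Fin n, v i.castSucc.succ ^ 2 = v 0 ^ 2 + 1 := by
  have := hv.1
  simp only [B, ← sq] at this
  rw [Fin.sum_univ_castSucc, hv.apply_last] at this
  linarith

lemma eq_of_apply_zero_of_apply_castSucc {v w : L n} (h0 : v 0 = w 0)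
    (hcast : ∀ i : Fin n, v i.castSucc.succ = w i.castSucc.succ)
    (hlast : v (Fin.last n).succ = w (Fin.last n).succ) : v = w :=
  funext fun j => Fin.cases h0 (fun i => Fin.lastCases hlast hcast i) j

lemma exists_eq_single_of_sum_eq_one_of_sum_sq_eq_one {ι : Type*} [Fintype ι] [DecidableEq ι]
    {f : ι → ℤ} (h1 : ∑ i, f i = 1) (h2 : ∑ i, f i ^ 2 = 1) : ∃ t, f = Pi.single t 1 := by
  have hidem : ∀ i, f i ^ 2 = f i := by
    have hsum : ∑ i, (f i ^ 2 - f i) = 0 := by rw [Finset.sum_sub_distrib, h1, h2, sub_self]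
    intro i
    have := (Finset.sum_eq_zero_iff_of_nonneg fun i _ => sub_nonneg.2 (Int.le_self_sq (f i))).1
      hsum i (Finset.mem_univ i)
    linarith
  have hnonneg : ∀ i, 0 ≤ f i := fun i => hidem i ▸ sq_nonneg (f i)
  obtain ⟨t, -, ht⟩ := Finset.exists_ne_zero_of_sum_ne_zero (h1 ▸ one_ne_zero : ∑ i, f i ≠ 0)
  have ht1 : f t = 1 := mul_left_cancel₀ ht (by rw [← sq, hidem, mul_one])
  refine ⟨t, funext fun s => ?_⟩
  rw [Pi.single_apply]
  split_ifs with hs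
  · rw [hs, ht1]
  · have hrest : ∑ i ∈ Finset.univ.erase t, f i = 0 := by
      have := Finset.add_sum_erase Finset.univ f (Finset.mem_univ t)
      linarith
    exact (Finset.sum_eq_zero_iff_of_nonneg fun i _ => hnonneg i).1 hrest s
      (Finset.mem_erase.2 ⟨hs, Finset.mem_univ s⟩)

lemma _root_.Monotone.add_add_add_mul_le_sum {k : ℕ} {f : Fin (k + 3) → ℤ} (hf : Monotone f) :
    f 0 + f 1 + f 2 + k * f 2 ≤ ∑ i, f i := by
  have hrest : k * f 2 ≤ ∑ i : Fin k, f i.succ.succ.succ := by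
    simpa using Finset.card_nsmul_le_sum Finset.univ (fun i : Fin k => f i.succ.succ.succ) (f 2)
      fun i _ => hf (by simp [Fin.le_def, Nat.mod_eq_of_lt (by omega : 2 < k + 3)])
  simp only [Fin.sum_univ_succ, Fin.succ_zero_eq_one, Fin.succ_one_eq_two]
  linarith

lemma _root_.Monotone.add_add_le_of_sum_eq_of_sum_sq_eq {k : ℕ} (hk : k ≤ 5) {a : ℤ} (ha : 0 < a)
    {f : Fin (k + 3) → ℤ} (hf : Monotone f) (hsum : ∑ i, f i = 1 - 3 * a)
    (hsq : ∑ i, f i ^ 2 = a ^ 2 + 1) : f 0 + f 1 + f 2 ≤ -(a + 1) := by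
  -- Otherwise averaging over the sorted values forces `a = 3`, `k = 5` and every `f i = -1`.
  by_contra! hT
  have h01 : f 0 ≤ f 1 := hf (by simp)
  have h12 : f 1 ≤ f 2 := hf (by simp [Fin.le_def, Nat.mod_eq_of_lt (by omega : 2 < k + 3)])
  have hrest := hf.add_add_add_mul_le_sum
  have hk0 : (0 : ℤ) ≤ k := by positivity
  have h2neg : f 2 < 0 := by
    by_contra! h2
    nlinarith [mul_nonneg hk0 h2]
  have hmean : (k + 3 : ℤ) * (f 0 + f 1 + f 2) ≤ 3 * (1 - 3 * a) := by
    nlinarith [mul_le_mul_of_nonneg_left (by linarith : f 0 + f 1 + f 2 ≤ 3 * f 2) hk0]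
  have ha3 : a = 3 := by
    have hk5 : (k : ℤ) ≤ 5 := by exact_mod_cast hk
    nlinarith [mul_le_mul_of_nonneg_left (by linarith : -a ≤ f 0 + f 1 + f 2)
      (by linarith : (0 : ℤ) ≤ k + 3)]
  subst ha3
  obtain rfl : k = 5 := by
    have : (5 : ℤ) ≤ k := by nlinarith
    omega
  have hge : ∀ i, -1 ≤ f i := fun i => (by linarith : (-1 : ℤ) ≤ f 0).trans (hf (Fin.zero_le i))
  have hall : ∀ i, f i = -1 := by
    have := (Finset.sum_eq_sum_iff_of_le (s := Finset.univ) fun i _ => hge i).1 (by simp [hsum])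
    exact fun i => (this i (Finset.mem_univ i)).symm
  simp [hall] at hsq

lemma exists_add_add_le_of_sum_eq_of_sum_sq_eq {m : ℕ} (hm : 3 ≤ m) (hm' : m ≤ 8) {a : ℤ}
    (ha : 0 < a) {f : Fin m → ℤ} (hsum : ∑ i, f i = 1 - 3 * a) (hsq : ∑ i, f i ^ 2 = a ^ 2 + 1) :
    ∃ i j k, i ≠ j ∧ i ≠ k ∧ j ≠ k ∧ f i + f j + f k ≤ -(a + 1) := by
  obtain ⟨k, rfl⟩ : ∃ k, m = k + 3 := ⟨m - 3, by omega⟩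
  set σ := Tuple.sort f
  have h2 : 2 % (k + 3) = 2 := Nat.mod_eq_of_lt (by omega)
  refine ⟨σ 0, σ 1, σ 2, σ.injective.ne ?_, σ.injective.ne ?_, σ.injective.ne ?_,
    (Tuple.monotone_sort f).add_add_le_of_sum_eq_of_sum_sq_eq (by omega) ha ?_ ?_⟩
  · simp
  · simp [Fin.ext_iff, h2]
  · simp [Fin.ext_iff, h2]
  · rwa [← Equiv.sum_comp σ] at hsum
  · rwa [← Equiv.sum_comp σ] at hsq

lemma IsLine.exists_mem_apply_zero_lt (hn : 3 ≤ n) (hn' : n ≤ 8) {v : L n} (hv : IsLine n v)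
    (h0 : 0 < v 0) : ∃ g ∈ isometryGroupKC n, g v 0 < v 0 := by
  obtain ⟨i, j, k, hij, hik, hjk, hle⟩ :=
    exists_add_add_le_of_sum_eq_of_sum_sq_eq hn hn' h0 hv.sum_eq hv.sum_sq_eq
  have hα := isRoot_h_sub_l_sub_l_sub_l hij hik hjk
  refine ⟨reflect hα, reflect_mem hα, ?_⟩
  -- the reflected line has `h`-coefficient `2 v 0 + vᵢ + vⱼ + vₖ`
  rw [reflect_apply, B_comm, B_h_sub_l_sub_l_sub_l]
  simp only [Pi.add_apply, Pi.smul_apply, smul_eq_mul, Pi.sub_apply, h_apply_zero, l_apply_zero,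
    sub_zero, mul_one]
  linarith

lemma IsLine.exists_mem_apply_zero_nonpos (hn : 3 ≤ n) (hn' : n ≤ 8) {v : L n}
    (hv : IsLine n v) : ∃ g ∈ isometryGroupKC n, g v 0 ≤ 0 := by
  induction hd : (v 0).toNat using Nat.strong_induction_on generalizing v with
  | _ d ih =>
    by_cases h0 : v 0 ≤ 0
    · exact ⟨1, one_mem _, h0⟩
    obtain ⟨g, hg, hlt⟩ := hv.exists_mem_apply_zero_lt hn hn' (by omega)
    obtain ⟨g', hg', hle⟩ := ih _ (by omega) (hv.map hg) rfl
    exact ⟨g' * g, mul_mem hg' hg, hle⟩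

lemma IsLine.exists_eq_l_of_apply_zero_nonpos (hn' : n ≤ 8) {v : L n} (hv : IsLine n v)
    (h0 : v 0 ≤ 0) : ∃ i : Fin n, v = l n i.castSucc := by
  have hsum := hv.sum_eq
  have hsq := hv.sum_sq_eq
  have hcs : (1 - 3 * v 0) ^ 2 ≤ 8 * (v 0 ^ 2 + 1) := by
    have := sq_sum_le_card_mul_sum_sq (s := Finset.univ) (f := fun i : Fin n => v i.castSucc.succ)
    rw [hsum, hsq, Finset.card_univ, Fintype.card_fin] at this
    nlinarith [sq_nonneg (v 0)]
  have hle_sq : 1 - 3 * v 0 ≤ v 0 ^ 2 + 1 :=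
    hsum ▸ hsq ▸ Finset.sum_le_sum fun i _ => Int.le_self_sq _
  obtain ha | ha : v 0 = -1 ∨ v 0 = 0 := by
    have : -1 ≤ v 0 := by nlinarith
    omega
  · rw [ha] at hle_sq
    norm_num at hle_sq
  obtain ⟨i, hi⟩ := exists_eq_single_of_sum_eq_one_of_sum_sq_eq_one
    (f := fun i : Fin n => v i.castSucc.succ) (by rw [hsum, ha]; ring) (by rw [hsq, ha]; ring)
  refine ⟨i, eq_of_apply_zero_of_apply_castSucc (by simp [ha]) (fun j => ?_) ?_⟩
  · simpa [Pi.single_apply] using congrFun hi j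
  · rw [hv.apply_last, l_apply_succ, if_neg (Fin.castSucc_ne_last i).symm]

lemma exists_mem_apply_l_eq_l (i j : Fin n) :
    ∃ g ∈ isometryGroupKC n, g (l n i.castSucc) = l n j.castSucc := by
  rcases eq_or_ne i j with rfl | hij
  · exact ⟨1, one_mem _, rfl⟩
  refine ⟨reflect (isRoot_l_sub_l hij), reflect_mem _, ?_⟩
  rw [reflect_apply, B_comm, B_l_sub_l]
  simp [Ne.symm hij]

lemma IsLine.exists_mem_apply_eq (hn : 3 ≤ n) (hn' : n ≤ 8) {v w : L n} (hv : IsLine n v)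
    (hw : IsLine n w) : ∃ g ∈ isometryGroupKC n, g v = w := by
  obtain ⟨gv, hgv, hv0⟩ := hv.exists_mem_apply_zero_nonpos hn hn'
  obtain ⟨gw, hgw, hw0⟩ := hw.exists_mem_apply_zero_nonpos hn hn'
  obtain ⟨i, hi⟩ := (hv.map hgv).exists_eq_l_of_apply_zero_nonpos hn' hv0
  obtain ⟨j, hj⟩ := (hw.map hgw).exists_eq_l_of_apply_zero_nonpos hn' hw0
  obtain ⟨p, hp, hpij⟩ := exists_mem_apply_l_eq_l i j
  refine ⟨gw⁻¹ * p * gv, mul_mem (mul_mem (inv_mem hgw) hp) hgv, ?_⟩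
  rw [LinearEquiv.mul_apply, LinearEquiv.mul_apply, hi, hpij, ← hj, LinearEquiv.coe_inv,
    LinearEquiv.symm_apply_apply]

end

/-- For an `Eₙ`-surface (`4 ≤ n ≤ 8`), the group of isometries of the Picard lattice fixing
`K` and `C` acts transitively on the set of lines: for any two lines `v, w` there is a
ℤ-linear automorphism `g` of `L` preserving `B` with `g K = K`, `g C = C`, `g v = w`. -/
theorem En_isometries_transitive_on_lines (n : ℕ) (hn : 4 ≤ n) (hn' : n ≤ 8)
    (v w : L n)
    (hv : B n v v = -1 ∧ B n v (K n) = -1 ∧ B n v (C n) = 0)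
    (hw : B n w w = -1 ∧ B n w (K n) = -1 ∧ B n w (C n) = 0) :
    ∃ g : L n ≃ₗ[ℤ] L n,
      (∀ x y : L n, B n (g x) (g y) = B n x y) ∧
      g (K n) = K n ∧ g (C n) = C n ∧ g v = w := by
  obtain ⟨g, ⟨hB, hK, hC⟩, hgv⟩ :=
    IsLine.exists_mem_apply_eq (by omega) hn' hv hw
  exact ⟨g, hB, hK, hC, hgv⟩

end ADEPaper
end
end
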